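/- arXiv:1803.10937 — 4 statements merged into one kernel-verified Lean document; each statement's English description precedes it below -/
import Mathlib

section
/- (Rejection rule correctness.) Let S be a nonempty finite set of arms, and for each arm j ∈ S let μ_j ∈ ℝ be its true mean and LCB_j, UCB_j ∈ ℝ satisfy LCB_j ≤ μ_j ≤ UCB_j. Let k be a positive integer with |S| ≥ k. If an arm i ∈ S satisfies UCB_i < max^{(k)}_{j∈S} LCB_j (the k-th largest value among {LCB_j : j ∈ S}), then at least k arms j ∈ S satisfy μ_j > μ_i; in particular, i is not among the k arms of S with the largest true means. -/
/-!
Write `t` for the `k`-th largest lower confidence bound. The last `k` entries of the sorted list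
of lower bounds are all at least `t`, so at least `k` arms `j` have `LCB j ≥ t`, and each of them
satisfies `μ j ≥ LCB j ≥ t > UCB i ≥ μ i`.
-/

/-- The `k`-th largest value (counted with multiplicity) of the multiset
`{v j : j ∈ S}`, intended for `1 ≤ k ≤ S.card`. It is the element at position
`S.card - k` of the list of values sorted in increasing order. -/
noncomputable def kthLargest {ι : Type*} (S : Finset ι) (v : ι → ℝ) (k : ℕ) : ℝ :=
  ((S.val.map v).sort (· ≤ ·)).getD (S.card - k) 0

open Finset

theorem List.Pairwise.length_sub_le_countP_getElem_le {α : Type*} [Preorder α]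
    [DecidableLE α] {l : List α} (h : l.Pairwise (· ≤ ·)) {m : ℕ} (hm : m < l.length) :
    l.length - m ≤ l.countP (fun x => l[m] ≤ x) := by
  have hdrop : l.drop m = l[m] :: l.drop (m + 1) := List.drop_eq_getElem_cons hm
  have htail : ∀ x ∈ l.drop m, l[m] ≤ x := by
    have hsorted := h.drop (i := m)
    rw [hdrop] at hsorted ⊢
    rintro x (_ | ⟨_, hx⟩)
    exacts [le_rfl, List.rel_of_pairwise_cons hsorted hx]
  calc l.length - m = (l.drop m).countP (fun x => l[m] ≤ x) := by
        rw [List.countP_eq_length.mpr (by simpa using htail), List.length_drop]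
    _ ≤ l.countP (fun x => l[m] ≤ x) := (List.drop_sublist m l).countP_le

theorem le_card_filter_kthLargest_le {ι : Type*} (S : Finset ι) (v : ι → ℝ) {k : ℕ}
    (hk : k ≤ #S) : k ≤ #(S.filter fun j => kthLargest S v k ≤ v j) := by
  rcases Nat.eq_zero_or_pos k with rfl | hk_pos
  · exact Nat.zero_le _
  set l := (S.val.map v).sort (· ≤ ·)
  have hlen : l.length = #S := by simp [l]
  have hm : #S - k < l.length := by omega
  have hcount : #(S.filter fun j => kthLargest S v k ≤ v j)
      = l.countP (fun x => kthLargest S v k ≤ x) := by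
    rw [← Multiset.coe_countP, Multiset.sort_eq, Multiset.countP_map, card_def, filter_val]
  have hkth : kthLargest S v k = l[#S - k] := List.getD_eq_getElem _ _ hm
  have hsorted : l.Pairwise (· ≤ ·) := Multiset.pairwise_sort _ _
  rw [hcount, hkth]
  exact (by omega : k ≤ l.length - (#S - k)).trans (hsorted.length_sub_le_countP_getElem_le hm)

theorem rejection_rule_correct_general {ι : Type*}
    (S : Finset ι) (μ LCB UCB : ι → ℝ)
    (hbounds : ∀ j ∈ S, LCB j ≤ μ j ∧ μ j ≤ UCB j)
    (k : ℕ) (hcard : k ≤ S.card)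
    (i : ι) (hi : i ∈ S) (hrej : UCB i < kthLargest S LCB k) :
    k ≤ (S.filter (fun j => μ i < μ j)).card := by
  have hsub : S.filter (fun j => kthLargest S LCB k ≤ LCB j) ⊆ S.filter (fun j => μ i < μ j) :=
    monotone_filter_right S fun j hj hLCB => by
      linarith [(hbounds i hi).2, (hbounds j hj).1]
  exact (le_card_filter_kthLargest_le S LCB hcard).trans (card_le_card hsub)

/-- Rejection rule correctness: if each arm's confidence interval traps its true mean
and arm `i ∈ S` satisfies `UCB i < max^{(k)}_{j ∈ S} LCB j` (the `k`-th largest lower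
confidence bound among `S`), then at least `k` arms `j ∈ S` have `μ j > μ i`; in
particular `i` is not among the `k` arms of `S` with the largest true means. -/
theorem rejection_rule_correct {ι : Type*} [DecidableEq ι]
    (S : Finset ι) (hS : S.Nonempty) (μ LCB UCB : ι → ℝ)
    (hbounds : ∀ j ∈ S, LCB j ≤ μ j ∧ μ j ≤ UCB j)
    (k : ℕ) (hk : 1 ≤ k) (hcard : k ≤ S.card)
    (i : ι) (hi : i ∈ S) (hrej : UCB i < kthLargest S LCB k) :
    k ≤ (S.filter (fun j => μ i < μ j)).card :=
  rejection_rule_correct_general S μ LCB UCB hbounds k hcard i hi hrej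
end

section
/- (Acceptance rule correctness.) Let S be a finite set of arms with |S| ≥ k + 1 for a positive integer k, and for each arm j ∈ S let μ_j ∈ ℝ be its true mean and LCB_j, UCB_j ∈ ℝ satisfy LCB_j ≤ μ_j ≤ UCB_j. If an arm i ∈ S satisfies LCB_i > max^{(k+1)}_{j∈S} UCB_j (the (k+1)-th largest value among {UCB_j : j ∈ S}), then at most k − 1 arms j ∈ S satisfy μ_j > μ_i; in particular, i is among the k arms of S with the largest true means. -/
theorem List.SortedLE.countP_getElem_lt_le {α : Type*} [LinearOrder α] {L : List α}
    (hL : L.SortedLE) {m : ℕ} (hm : m < L.length) :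
    L.countP (fun x => L[m] < x) ≤ L.length - (m + 1) := by
  have hprefix : (L.take (m + 1)).countP (fun x => L[m] < x) = 0 := by
    refine List.countP_eq_zero.mpr fun x hx => ?_
    obtain ⟨j, hj, rfl⟩ := List.mem_take_iff_getElem.mp hx
    simpa using hL.getElem_le_getElem_of_le (by omega : j ≤ m)
  have hsplit :=
    List.countP_append (p := fun x => L[m] < x) (l₁ := L.take (m + 1)) (l₂ := L.drop (m + 1))
  rw [List.take_append_drop, hprefix, zero_add] at hsplit
  rw [hsplit, ← List.length_drop]
  exact List.countP_le_length

theorem Finset.card_filter_eq_countP_sort {ι α : Type*} [LinearOrder α] (S : Finset ι)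
    (v : ι → α) (p : α → Prop) [DecidablePred p] :
    (S.filter (fun j => p (v j))).card = ((S.val.map v).sort (· ≤ ·)).countP p := by
  rw [← Multiset.coe_countP, Multiset.sort_eq, Multiset.countP_map]
  rfl

theorem card_filter_kthLargest_succ_lt_le {ι : Type*} (S : Finset ι) (v : ι → ℝ) (k : ℕ) :
    (S.filter (fun j => kthLargest S v (k + 1) < v j)).card ≤ k := by
  by_cases hcard : k + 1 ≤ S.card
  · have hlen : ((S.val.map v).sort (· ≤ ·)).length = S.card := by
      rw [Multiset.length_sort, Multiset.card_map, Finset.card_val]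
    have hm : S.card - (k + 1) < ((S.val.map v).sort (· ≤ ·)).length := by omega
    rw [kthLargest, List.getD_eq_getElem _ _ hm, Finset.card_filter_eq_countP_sort S v (_ < ·)]
    exact ((Multiset.pairwise_sort _ _).sortedLE.countP_getElem_lt_le hm).trans (by omega)
  · exact (Finset.card_filter_le _ _).trans (by omega)

theorem acceptance_rule_correct_general {ι : Type*} [DecidableEq ι]
    (S : Finset ι) (μ LCB UCB : ι → ℝ)
    (hbounds : ∀ j ∈ S, LCB j ≤ μ j ∧ μ j ≤ UCB j)
    (k : ℕ)
    (i : ι) (hi : i ∈ S) (hacc : kthLargest S UCB (k + 1) < LCB i) :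
    (S.filter (fun j => μ i < μ j)).card ≤ k - 1 := by
  set t := kthLargest S UCB (k + 1)
  have hsub : insert i (S.filter (fun j => μ i < μ j)) ⊆ S.filter (fun j => t < UCB j) := by
    intro j hj
    obtain ⟨hLi, hUi⟩ := hbounds i hi
    rcases Finset.mem_insert.mp hj with rfl | hj
    · exact Finset.mem_filter.mpr ⟨hi, by linarith⟩
    · obtain ⟨hjS, hij⟩ := Finset.mem_filter.mp hj
      exact Finset.mem_filter.mpr ⟨hjS, by linarith [(hbounds j hjS).2]⟩
  have hcount := (Finset.card_le_card hsub).trans (card_filter_kthLargest_succ_lt_le S UCB k)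
  rw [Finset.card_insert_of_notMem (by simp)] at hcount
  omega

/-- Acceptance rule correctness: if each arm's confidence interval traps its true mean
and arm `i ∈ S` satisfies `LCB i > max^{(k+1)}_{j ∈ S} UCB j` (the `(k+1)`-th largest
upper confidence bound among `S`), then at most `k - 1` arms `j ∈ S` have `μ j > μ i`;
in particular `i` is among the `k` arms of `S` with the largest true means. -/
theorem acceptance_rule_correct {ι : Type*} [DecidableEq ι]
    (S : Finset ι) (μ LCB UCB : ι → ℝ)
    (hbounds : ∀ j ∈ S, LCB j ≤ μ j ∧ μ j ≤ UCB j)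
    (k : ℕ) (hk : 1 ≤ k) (hcard : k + 1 ≤ S.card)
    (i : ι) (hi : i ∈ S) (hacc : kthLargest S UCB (k + 1) < LCB i) :
    (S.filter (fun j => μ i < μ j)).card ≤ k - 1 :=
  acceptance_rule_correct_general S μ LCB UCB hbounds k i hi hacc
end

section
/- (Invariant preservation for one racing update step.) Let n arms have distinct true means μ_1 > μ_2 > ... > μ_n and let 1 ≤ k ≤ n. Let A, R, S be pairwise disjoint subsets of {1, ..., n} with A ∪ R ∪ S = {1, ..., n}, A ⊆ {1, ..., k}, and {1, ..., k} \ A ⊆ S, and set k_t = k − |A|. Suppose for every j ∈ S we are given LCB_j ≤ μ_j ≤ UCB_j. Define the updated sets A' = A ∪ {i ∈ S : LCB_i > max^{(k_t+1)}_{j∈S} UCB_j} and R' = R ∪ {i ∈ S : UCB_i < max^{(k_t)}_{j∈S} LCB_j}, where max^{(m)}_{j∈S} of a family of values is taken to be −∞ whenever |S| < m, and S' = S \ (A' ∪ R'). Then A' ⊆ {1, ..., k}, R' ∩ {1, ..., k} = ∅, and {1, ..., k} \ A' ⊆ S'. -/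
open scoped Classical

/-- The `m`-th largest value (counted with multiplicity) of the multiset
`{v j : j ∈ S}`, as an extended real number; it is taken to be `⊥ = -∞`
whenever `S.card < m`. -/
noncomputable def kthLargestE {ι : Type*} (S : Finset ι) (v : ι → ℝ) (m : ℕ) : EReal :=
  if m ≤ S.card then ((((S.val.map v).sort (· ≤ ·)).getD (S.card - m) 0 : ℝ) : EReal)
  else ⊥

/-!
An arm outside the top `k` is dominated, in true mean, by itself and by all `k_t` top arms still
surviving, so these `k_t + 1` arms all have UCB at least its LCB and it cannot be accepted.
A surviving top arm `i` can only be beaten in LCB by arms of larger mean than `μ i`, i.e. by the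
at most `k_t - 1` other surviving top arms, so it cannot be rejected.
-/

open Finset

theorem List.Pairwise.length_sub_le_countP_le_iff {α : Type*} [LinearOrder α] {l : List α}
    (hl : l.Pairwise (· ≤ ·)) {p : ℕ} (hp : p < l.length) (c : α) :
    l.length - p ≤ l.countP (fun a => c ≤ a) ↔ c ≤ l[p] := by
  have hsplit : l = l.take p ++ l[p] :: l.drop (p + 1) := by
    rw [← List.drop_eq_getElem_cons hp, List.take_append_drop]
  have hcount := congrArg (List.countP (fun a => c ≤ a)) hsplit
  have hlen := congrArg List.length hsplit
  rw [hsplit, List.pairwise_append, List.pairwise_cons] at hl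
  obtain ⟨-, ⟨hhead, -⟩, hcross⟩ := hl
  simp only [List.countP_append, List.countP_cons, List.length_append, List.length_cons,
    List.length_take_of_le hp.le] at hcount hlen
  constructor
  · intro h
    by_contra! hlt
    have hlow : (l.take p).countP (fun a => c ≤ a) = 0 :=
      List.countP_eq_zero.2 fun a ha => by
        simpa using (hcross a ha l[p] List.mem_cons_self).trans_lt hlt
    have hhigh := (l.drop (p + 1)).countP_le_length (p := fun a => c ≤ a)
    simp only [hlt.not_ge, decide_false, Bool.false_eq_true, if_false] at hcount
    omega
  · intro h
    have hhigh : (l.drop (p + 1)).countP (fun a => c ≤ a) = (l.drop (p + 1)).length :=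
      List.countP_eq_length.2 fun a ha => by simpa using h.trans (hhead a ha)
    simp only [h, decide_true, if_true] at hcount
    omega

theorem coe_le_kthLargestE_iff {ι : Type*} (S : Finset ι) (v : ι → ℝ) {m : ℕ} (hm : 1 ≤ m)
    (hmS : m ≤ #S) (c : ℝ) :
    (c : EReal) ≤ kthLargestE S v m ↔ m ≤ #{j ∈ S | c ≤ v j} := by
  set l := (S.val.map v).sort (· ≤ ·)
  have hlen : l.length = #S := by simp [l, Multiset.length_sort]
  have hcard : #{j ∈ S | c ≤ v j} = l.countP (fun a => c ≤ a) := by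
    rw [← Multiset.coe_countP, Multiset.sort_eq, Multiset.countP_map]
    rfl
  have hp : #S - m < l.length := by omega
  rw [kthLargestE, if_pos hmS, List.getD_eq_getElem _ _ hp, EReal.coe_le_coe_iff, hcard,
    ← (Multiset.pairwise_sort _ _).length_sub_le_countP_le_iff hp, hlen, Nat.sub_sub_self hmS]

theorem coe_le_kthLargestE {ι : Type*} {S : Finset ι} {v : ι → ℝ} {m : ℕ} {c : ℝ} (hm : 1 ≤ m)
    (h : m ≤ #{j ∈ S | c ≤ v j}) : (c : EReal) ≤ kthLargestE S v m :=
  (coe_le_kthLargestE_iff S v hm (h.trans (card_filter_le _ _)) c).2 h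

theorem le_card_filter_lt_of_coe_lt_kthLargestE {ι : Type*} {S : Finset ι} {v : ι → ℝ} {m : ℕ}
    {c : ℝ} (h : (c : EReal) < kthLargestE S v m) : m ≤ #{j ∈ S | c < v j} := by
  rcases Nat.eq_zero_or_pos m with rfl | hm
  · exact Nat.zero_le _
  have hmS : m ≤ #S := by
    by_contra hmS
    rw [kthLargestE, if_neg hmS] at h
    exact not_lt_bot h
  obtain ⟨x, hx⟩ : ∃ x : ℝ, kthLargestE S v m = x := ⟨_, if_pos hmS⟩
  have hcx : c < x := EReal.coe_lt_coe_iff.1 (hx ▸ h)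
  calc m ≤ #{j ∈ S | x ≤ v j} := (coe_le_kthLargestE_iff S v hm hmS x).1 hx.ge
    _ ≤ #{j ∈ S | c < v j} := card_le_card (monotone_filter_right _ fun j _ hj => hcx.trans_le hj)

section Racing

variable {ι : Type*} {μ LCB UCB : ι → ℝ} {S U : Finset ι}

theorem coe_lcb_le_kthLargestE_ucb_of_notMem (hbounds : ∀ j ∈ S, LCB j ≤ μ j ∧ μ j ≤ UCB j)
    (hsep : ∀ i ∈ S, i ∉ U → ∀ j ∈ U, μ i ≤ μ j) (hUS : U ⊆ S) {i : ι} (hiS : i ∈ S)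
    (hiU : i ∉ U) : (LCB i : EReal) ≤ kthLargestE S UCB (#U + 1) := by
  refine coe_le_kthLargestE (Nat.le_add_left 1 _) ?_
  rw [← card_insert_of_notMem hiU]
  refine card_le_card fun j hj => ?_
  rcases mem_insert.1 hj with rfl | hjU
  · exact mem_filter.2 ⟨hiS, (hbounds j hiS).1.trans (hbounds j hiS).2⟩
  · exact mem_filter.2 ⟨hUS hjU,
      (hbounds i hiS).1.trans <| (hsep i hiS hiU j hjU).trans (hbounds j (hUS hjU)).2⟩

theorem kthLargestE_lcb_le_coe_ucb_of_mem (hbounds : ∀ j ∈ S, LCB j ≤ μ j ∧ μ j ≤ UCB j)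
    (hsep : ∀ i ∈ S, i ∉ U → ∀ j ∈ U, μ i ≤ μ j) (hUS : U ⊆ S) {i : ι} (hiU : i ∈ U) :
    kthLargestE S LCB #U ≤ (UCB i : EReal) := by
  by_contra! h
  have hbetter : {j ∈ S | UCB i < LCB j} ⊆ U.erase i := fun j hj => by
    obtain ⟨hjS, hij⟩ := mem_filter.1 hj
    have hμ : μ i < μ j :=
      (hbounds i (hUS hiU)).2.trans_lt (hij.trans_le (hbounds j hjS).1)
    refine mem_erase.2 ⟨fun hji => hμ.ne (hji ▸ rfl), ?_⟩
    by_contra hjU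
    exact hμ.not_ge (hsep j hjS hjU i hiU)
  have := (le_card_filter_lt_of_coe_lt_kthLargestE h).trans (card_le_card hbetter)
  rw [card_erase_of_mem hiU] at this
  have := card_pos.2 ⟨i, hiU⟩
  omega

end Racing

theorem racing_update_invariant_general (n k : ℕ) (hkn : k ≤ n)
    (μ : Fin n → ℝ) (hmono : ∀ i j : Fin n, i < j → μ j < μ i)
    (A R S : Finset (Fin n))
    (hAR : Disjoint A R) (hAS : Disjoint A S) (hRS : Disjoint R S)
    (hA : A ⊆ Finset.univ.filter (fun i : Fin n => (i : ℕ) < k))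
    (hrem : Finset.univ.filter (fun i : Fin n => (i : ℕ) < k) \ A ⊆ S)
    (LCB UCB : Fin n → ℝ)
    (hbounds : ∀ j ∈ S, LCB j ≤ μ j ∧ μ j ≤ UCB j)
    (A' R' S' : Finset (Fin n))
    (hA' : A' = A ∪ S.filter
      (fun i => kthLargestE S UCB (k - A.card + 1) < ((LCB i : ℝ) : EReal)))
    (hR' : R' = R ∪ S.filter
      (fun i => ((UCB i : ℝ) : EReal) < kthLargestE S LCB (k - A.card)))
    (hS' : S' = S \ (A' ∪ R')) :
    A' ⊆ Finset.univ.filter (fun i : Fin n => (i : ℕ) < k) ∧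
    R' ∩ Finset.univ.filter (fun i : Fin n => (i : ℕ) < k) = ∅ ∧
    Finset.univ.filter (fun i : Fin n => (i : ℕ) < k) \ A' ⊆ S' := by
  set T := Finset.univ.filter (fun i : Fin n => (i : ℕ) < k)
  have hcard : k - #A = #(T \ A) := by
    rw [card_sdiff_of_subset hA, Fin.card_filter_val_lt, min_eq_right hkn]
  have hsep : ∀ i ∈ S, i ∉ T \ A → ∀ j ∈ T \ A, μ i ≤ μ j := by
    intro i hiS hiU j hjU
    have hiT : i ∉ T := fun hiT => hiU (mem_sdiff.2 ⟨hiT, disjoint_right.1 hAS hiS⟩)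
    simp only [T, mem_sdiff, mem_filter, mem_univ, true_and] at hiT hjU
    exact (hmono j i (Fin.lt_def.2 (by omega))).le
  rw [hcard] at hA' hR'
  have hnotR' : ∀ i ∈ T, i ∉ R' := by
    intro i hiT hiR'
    rcases mem_union.1 (hR' ▸ hiR') with hiR | hiF
    · by_cases hiA : i ∈ A
      · exact disjoint_left.1 hAR hiA hiR
      · exact disjoint_left.1 hRS hiR (hrem (mem_sdiff.2 ⟨hiT, hiA⟩))
    · obtain ⟨hiS, hlt⟩ := mem_filter.1 hiF
      exact hlt.not_ge (kthLargestE_lcb_le_coe_ucb_of_mem hbounds hsep hrem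
        (mem_sdiff.2 ⟨hiT, disjoint_right.1 hAS hiS⟩))
  refine ⟨?_, disjoint_iff_inter_eq_empty.1 (disjoint_right.2 hnotR'), ?_⟩
  · refine hA' ▸ union_subset hA fun i hi => ?_
    obtain ⟨hiS, hlt⟩ := mem_filter.1 hi
    by_contra hiT
    exact hlt.not_ge (coe_lcb_le_kthLargestE_ucb_of_notMem hbounds hsep hrem hiS
      fun hiU => hiT (mem_sdiff.1 hiU).1)
  · intro i hi
    obtain ⟨hiT, hiA'⟩ := mem_sdiff.1 hi
    have hiS : i ∈ S := hrem (mem_sdiff.2 ⟨hiT, fun hiA => hiA' (hA' ▸ mem_union_left _ hiA)⟩)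
    exact hS' ▸ mem_sdiff.2 ⟨hiS, notMem_union.2 ⟨hiA', hnotR' i hiT⟩⟩

/-- Invariant preservation for one racing update step: with true means
`μ 0 > μ 1 > ⋯ > μ (n-1)`, top-`k` set `{i : i < k}`, disjoint sets `A ∪ R ∪ S = [n]`
with `A ⊆ top-k` and `top-k \ A ⊆ S`, valid confidence bounds on `S`, and the racing
update with `k_t = k - |A|` (accept arms whose LCB beats the `(k_t+1)`-th largest UCB,
reject arms whose UCB is below the `k_t`-th largest LCB), the updated sets satisfy
`A' ⊆ top-k`, `R' ∩ top-k = ∅`, and `top-k \ A' ⊆ S'`. -/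
theorem racing_update_invariant (n k : ℕ) (hk1 : 1 ≤ k) (hkn : k ≤ n)
    (μ : Fin n → ℝ) (hmono : ∀ i j : Fin n, i < j → μ j < μ i)
    (A R S : Finset (Fin n))
    (hAR : Disjoint A R) (hAS : Disjoint A S) (hRS : Disjoint R S)
    (hunion : A ∪ R ∪ S = Finset.univ)
    (hA : A ⊆ Finset.univ.filter (fun i : Fin n => (i : ℕ) < k))
    (hrem : Finset.univ.filter (fun i : Fin n => (i : ℕ) < k) \ A ⊆ S)
    (LCB UCB : Fin n → ℝ)
    (hbounds : ∀ j ∈ S, LCB j ≤ μ j ∧ μ j ≤ UCB j)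
    (A' R' S' : Finset (Fin n))
    (hA' : A' = A ∪ S.filter
      (fun i => kthLargestE S UCB (k - A.card + 1) < ((LCB i : ℝ) : EReal)))
    (hR' : R' = R ∪ S.filter
      (fun i => ((UCB i : ℝ) : EReal) < kthLargestE S LCB (k - A.card)))
    (hS' : S' = S \ (A' ∪ R')) :
    A' ⊆ Finset.univ.filter (fun i : Fin n => (i : ℕ) < k) ∧
    R' ∩ Finset.univ.filter (fun i : Fin n => (i : ℕ) < k) = ∅ ∧
    Finset.univ.filter (fun i : Fin n => (i : ℕ) < k) \ A' ⊆ S' :=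
  racing_update_invariant_general n k hkn μ hmono A R S hAR hAS hRS hA hrem LCB UCB hbounds A' R' S'
    hA' hR' hS'
end

section
/- (Deterministic core of Theorem 1: correctness of the racing procedure.) Let n arms have distinct true means μ_1 > μ_2 > ... > μ_n and let 1 ≤ k ≤ n. Consider a finite sequence of configurations (A_t, R_t, S_t) for t = 0, 1, ..., T of pairwise disjoint subsets of {1, ..., n} with A_t ∪ R_t ∪ S_t = {1, ..., n}, such that: (i) A_0 = R_0 = ∅ and S_0 = {1, ..., n}; (ii) for each t < T there exist bounds LCB_{j,t} ≤ μ_j ≤ UCB_{j,t} for all j ∈ S_t such that, with k_t = k − |A_t|, A_{t+1} = A_t ∪ {i ∈ S_t : LCB_{i,t} > max^{(k_t+1)}_{j∈S_t} UCB_{j,t}}, R_{t+1} = R_t ∪ {i ∈ S_t : UCB_{i,t} < max^{(k_t)}_{j∈S_t} LCB_{j,t}}, and S_{t+1} = S_t \ (A_{t+1} ∪ R_{t+1}), where max^{(m)}_{j∈S} is taken to be −∞ whenever |S| < m; and (iii) S_T = ∅. Then A_T = {1, ..., k}, i.e., the procedure outputs exactly the top-k arms. -/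
/-!
Let `best` be the set of the `k` arms with the largest means. The invariant is that every accepted
arm lies in `best` and no rejected arm does; then the surviving part of `best` has exactly
`k_t = k - |A_t|` elements. A surviving arm `i ∉ best` is not accepted: together with the `k_t`
surviving best arms it gives `k_t + 1` surviving arms whose UCB is at least `μ i`, so the
`(k_t+1)`-th largest UCB is at least `μ i ≥ LCB i`. A surviving arm `i ∈ best` is not rejected:
otherwise `k_t` surviving arms would have `LCB j > UCB i ≥ μ i`, hence larger means than `i`,
and all of them would lie in `best \ {i}`, which has only `k_t - 1` survivors. Once nothing
survives, `A ∪ R` covers all arms, so `A = best`.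
-/

open scoped Classical

namespace List
variable {α : Type*} [LinearOrder α] {l : List α}

lemma Pairwise.getElem_le_of_mem_drop (hl : l.Pairwise (· ≤ ·)) {i : ℕ} (hi : i < l.length)
    {x : α} (hx : x ∈ l.drop i) : l[i] ≤ x := by
  obtain ⟨j, hj, rfl⟩ := getElem_of_mem hx
  rw [getElem_drop]
  rcases Nat.eq_zero_or_pos j with rfl | hj0
  · simp
  · exact pairwise_iff_getElem.mp hl _ _ _ _ (by omega)

lemma Pairwise.le_getElem_of_mem_take (hl : l.Pairwise (· ≤ ·)) {i : ℕ} (hi : i < l.length)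
    {x : α} (hx : x ∈ l.take (i + 1)) : x ≤ l[i] := by
  obtain ⟨j, hj, rfl⟩ := getElem_of_mem hx
  rw [getElem_take]
  simp only [length_take] at hj
  rcases lt_or_eq_of_le (show j ≤ i by omega) with hji | rfl
  · exact pairwise_iff_getElem.mp hl _ _ _ _ hji
  · exact le_rfl

lemma Pairwise.length_sub_le_countP_lt (hl : l.Pairwise (· ≤ ·)) {i : ℕ} (hi : i < l.length)
    {c : α} (hc : c < l[i]) : l.length - i ≤ l.countP (fun x => c < x) :=
  calc l.length - i = (l.drop i).countP (fun x => c < x) := by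
        rw [countP_eq_length.mpr, length_drop]
        intro x hx
        simpa using hc.trans_le (hl.getElem_le_of_mem_drop hi hx)
    _ ≤ l.countP (fun x => c < x) := (drop_sublist i l).countP_le

lemma Pairwise.countP_le_le_length_sub (hl : l.Pairwise (· ≤ ·)) {i : ℕ} (hi : i < l.length)
    {c : α} (hc : l[i] < c) : l.countP (fun x => c ≤ x) ≤ l.length - (i + 1) := by
  have htake : (l.take (i + 1)).countP (fun x => c ≤ x) = 0 := by
    rw [countP_eq_zero]
    intro x hx
    simpa using (hl.le_getElem_of_mem_take hi hx).trans_lt hc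
  calc l.countP (fun x => c ≤ x)
      = (l.take (i + 1)).countP (fun x => c ≤ x) + (l.drop (i + 1)).countP (fun x => c ≤ x) := by
        rw [← countP_append, take_append_drop]
    _ ≤ l.length - (i + 1) := by
        rw [htake, zero_add, ← length_drop]
        exact countP_le_length

end List

open Finset

section kthLargest
variable {ι : Type*} {S : Finset ι} {v : ι → ℝ} {m : ℕ} {c : ℝ}

lemma length_sort_map_val : ((S.val.map v).sort (· ≤ ·)).length = #S := by
  rw [Multiset.length_sort, Multiset.card_map, card_def]

lemma countP_sort_map_val (p : ℝ → Prop) [DecidablePred p] :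
    ((S.val.map v).sort (· ≤ ·)).countP (fun x => decide (p x)) = #{j ∈ S | p (v j)} := by
  rw [← Multiset.coe_countP, Multiset.sort_eq, Multiset.countP_map, card_def, filter_val]

lemma le_kthLargestE_of_le_card_filter (hm : 0 < m) (h : m ≤ #{j ∈ S | c ≤ v j}) :
    (c : EReal) ≤ kthLargestE S v m := by
  have hmS : m ≤ #S := h.trans (card_filter_le _ _)
  have hi : #S - m < ((S.val.map v).sort (· ≤ ·)).length := by
    rw [length_sort_map_val]; omega
  rw [kthLargestE, if_pos hmS, EReal.coe_le_coe_iff, List.getD_eq_getElem _ _ hi]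
  by_contra! hlt
  have := (Multiset.pairwise_sort _ _).countP_le_le_length_sub hi hlt
  rw [countP_sort_map_val, length_sort_map_val] at this
  omega

lemma le_card_filter_of_lt_kthLargestE (h : (c : EReal) < kthLargestE S v m) :
    m ≤ #{j ∈ S | c < v j} := by
  rw [kthLargestE] at h
  split_ifs at h with hmS
  · rcases Nat.eq_zero_or_pos m with rfl | hm
    · exact Nat.zero_le _
    have hi : #S - m < ((S.val.map v).sort (· ≤ ·)).length := by
      rw [length_sort_map_val]; omega
    rw [EReal.coe_lt_coe_iff, List.getD_eq_getElem _ _ hi] at h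
    have := (Multiset.pairwise_sort _ _).length_sub_le_countP_lt hi h
    rw [countP_sort_map_val, length_sort_map_val] at this
    omega
  · exact absurd h not_lt_bot

end kthLargest

section Racing
variable {ι : Type*} {μ : ι → ℝ} {best S : Finset ι} {LCB UCB : ι → ℝ}

noncomputable def racingAccept (S : Finset ι) (LCB UCB : ι → ℝ) (r : ℕ) : Finset ι :=
  {i ∈ S | kthLargestE S UCB (r + 1) < (LCB i : EReal)}

noncomputable def racingReject (S : Finset ι) (LCB UCB : ι → ℝ) (r : ℕ) : Finset ι :=
  {i ∈ S | (UCB i : EReal) < kthLargestE S LCB r}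

variable [DecidableEq ι]

lemma racingAccept_subset (hsep : ∀ i ∈ best, ∀ j ∉ best, μ j < μ i)
    (hbd : ∀ j ∈ S, LCB j ≤ μ j ∧ μ j ≤ UCB j) :
    racingAccept S LCB UCB #(S ∩ best) ⊆ best := by
  intro i hi
  rw [racingAccept, mem_filter] at hi
  obtain ⟨hiS, hacc⟩ := hi
  by_contra hib
  have hcount : #(S ∩ best) + 1 ≤ #{j ∈ S | μ i ≤ UCB j} := by
    rw [← card_insert_of_notMem fun h => hib (mem_inter.mp h).2]
    refine card_le_card (insert_subset (mem_filter.mpr ⟨hiS, (hbd i hiS).2⟩) fun j hj => ?_)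
    obtain ⟨hjS, hjb⟩ := mem_inter.mp hj
    exact mem_filter.mpr ⟨hjS, (hsep j hjb i hib).le.trans (hbd j hjS).2⟩
  have hle := le_kthLargestE_of_le_card_filter (Nat.succ_pos _) hcount
  exact not_lt.mpr ((EReal.coe_le_coe_iff.mpr (hbd i hiS).1).trans hle) hacc

lemma disjoint_racingReject (hsep : ∀ i ∈ best, ∀ j ∉ best, μ j < μ i)
    (hbd : ∀ j ∈ S, LCB j ≤ μ j ∧ μ j ≤ UCB j) :
    Disjoint (racingReject S LCB UCB #(S ∩ best)) best := by
  refine disjoint_left.mpr fun i hi hib => ?_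
  rw [racingReject, mem_filter] at hi
  obtain ⟨hiS, hrej⟩ := hi
  have hsub : {j ∈ S | UCB i < LCB j} ⊆ (S ∩ best).erase i := by
    intro j hj
    obtain ⟨hjS, hj⟩ := mem_filter.mp hj
    have hμ : μ i < μ j := ((hbd i hiS).2.trans_lt hj).trans_le (hbd j hjS).1
    have hjb : j ∈ best := by
      by_contra hjb
      exact (hsep i hib j hjb).not_gt hμ
    exact mem_erase.mpr ⟨fun h => hμ.ne (h ▸ rfl), mem_inter.mpr ⟨hjS, hjb⟩⟩
  have hcount := (le_card_filter_of_lt_kthLargestE hrej).trans (card_le_card hsub)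
  rw [card_erase_of_mem (mem_inter.mpr ⟨hiS, hib⟩)] at hcount
  have := card_pos.mpr ⟨i, mem_inter.mpr ⟨hiS, hib⟩⟩
  omega

variable {A R : Finset ι}

lemma card_inter_eq_card_sub (hA : A ⊆ best) (hR : Disjoint R best) (hAS : Disjoint A S)
    (hcover : best ⊆ A ∪ R ∪ S) : #(S ∩ best) = #best - #A := by
  rw [← card_sdiff_of_subset hA]
  congr 1
  ext j
  have hj := @hcover j
  simp only [mem_union] at hj
  simp only [mem_inter, mem_sdiff]
  grind [disjoint_left]

lemma racing_step_sound (hsep : ∀ i ∈ best, ∀ j ∉ best, μ j < μ i) {k : ℕ} (hk : #best = k)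
    (hA : A ⊆ best) (hR : Disjoint R best) (hAS : Disjoint A S) (hcover : best ⊆ A ∪ R ∪ S)
    (hbd : ∀ j ∈ S, LCB j ≤ μ j ∧ μ j ≤ UCB j) :
    A ∪ racingAccept S LCB UCB (k - #A) ⊆ best ∧
      Disjoint (R ∪ racingReject S LCB UCB (k - #A)) best := by
  rw [← hk, ← card_inter_eq_card_sub hA hR hAS hcover]
  exact ⟨union_subset hA (racingAccept_subset hsep hbd),
    disjoint_union_left.mpr ⟨hR, disjoint_racingReject hsep hbd⟩⟩

end Racing

theorem racing_procedure_correct_general (n k T : ℕ) (hkn : k ≤ n)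
    (μ : Fin n → ℝ) (hmono : ∀ i j : Fin n, i < j → μ j < μ i)
    (A R S : ℕ → Finset (Fin n))
    (hdisj : ∀ t ≤ T,
      Disjoint (A t) (R t) ∧ Disjoint (A t) (S t) ∧ Disjoint (R t) (S t))
    (hunion : ∀ t ≤ T, A t ∪ R t ∪ S t = Finset.univ)
    (hinitA : A 0 = ∅) (hinitR : R 0 = ∅)
    (hstep : ∀ t < T, ∃ LCB UCB : Fin n → ℝ,
      (∀ j ∈ S t, LCB j ≤ μ j ∧ μ j ≤ UCB j) ∧
      A (t + 1) = A t ∪ (S t).filter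
        (fun i => kthLargestE (S t) UCB (k - (A t).card + 1) < ((LCB i : ℝ) : EReal)) ∧
      R (t + 1) = R t ∪ (S t).filter
        (fun i => ((UCB i : ℝ) : EReal) < kthLargestE (S t) LCB (k - (A t).card)) ∧
      S (t + 1) = S t \ (A (t + 1) ∪ R (t + 1)))
    (hfin : S T = ∅) :
    A T = Finset.univ.filter (fun i : Fin n => (i : ℕ) < k) := by
  set best : Finset (Fin n) := {i | (i : ℕ) < k}
  have hsep : ∀ i ∈ best, ∀ j ∉ best, μ j < μ i := by
    simp only [best, mem_filter, mem_univ, true_and, not_lt]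
    exact fun i hi j hj => hmono i j (by omega)
  have hk : #best = k := by rw [Fin.card_filter_val_lt, min_eq_right hkn]
  have hinv : ∀ t ≤ T, A t ⊆ best ∧ Disjoint (R t) best := by
    intro t ht
    induction t with
    | zero => simp [hinitA, hinitR]
    | succ t ih =>
      obtain ⟨LCB, UCB, hbd, hA, hR, -⟩ := hstep t ht
      obtain ⟨hAt, hRt⟩ := ih (by omega)
      rw [hA, hR]
      exact racing_step_sound hsep hk hAt hRt (hdisj t (by omega)).2.1
        (hunion t (by omega) ▸ subset_univ best) hbd
  obtain ⟨hAT, hRT⟩ := hinv T le_rfl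
  refine subset_antisymm hAT fun i hi => ?_
  have hi' : i ∈ A T ∪ R T ∪ S T := hunion T le_rfl ▸ mem_univ i
  rw [hfin, union_empty, mem_union] at hi'
  exact hi'.resolve_right fun hiR => disjoint_left.mp hRT hiR hi

/-- Deterministic core of Theorem 1 (correctness of the racing procedure): with true
means `μ 0 > μ 1 > ⋯ > μ (n-1)` and `1 ≤ k ≤ n`, consider configurations
`(A t, R t, S t)` for `t = 0, …, T` of pairwise disjoint sets partitioning the arms,
starting from `A 0 = R 0 = ∅`, `S 0 = univ`, where each step is a racing update (with
`k_t = k - |A t|`: accept surviving arms whose LCB beats the `(k_t+1)`-th largest UCB,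
reject surviving arms whose UCB is below the `k_t`-th largest LCB, for some confidence
bounds trapping the true means of surviving arms). If `S T = ∅`, then
`A T = {i : i < k}`, i.e. the procedure outputs exactly the top-`k` arms. -/
theorem racing_procedure_correct (n k T : ℕ) (hk1 : 1 ≤ k) (hkn : k ≤ n)
    (μ : Fin n → ℝ) (hmono : ∀ i j : Fin n, i < j → μ j < μ i)
    (A R S : ℕ → Finset (Fin n))
    (hdisj : ∀ t ≤ T,
      Disjoint (A t) (R t) ∧ Disjoint (A t) (S t) ∧ Disjoint (R t) (S t))
    (hunion : ∀ t ≤ T, A t ∪ R t ∪ S t = Finset.univ)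
    (hinitA : A 0 = ∅) (hinitR : R 0 = ∅) (hinitS : S 0 = Finset.univ)
    (hstep : ∀ t < T, ∃ LCB UCB : Fin n → ℝ,
      (∀ j ∈ S t, LCB j ≤ μ j ∧ μ j ≤ UCB j) ∧
      A (t + 1) = A t ∪ (S t).filter
        (fun i => kthLargestE (S t) UCB (k - (A t).card + 1) < ((LCB i : ℝ) : EReal)) ∧
      R (t + 1) = R t ∪ (S t).filter
        (fun i => ((UCB i : ℝ) : EReal) < kthLargestE (S t) LCB (k - (A t).card)) ∧
      S (t + 1) = S t \ (A (t + 1) ∪ R (t + 1)))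
    (hfin : S T = ∅) :
    A T = Finset.univ.filter (fun i : Fin n => (i : ℕ) < k) :=
  racing_procedure_correct_general n k T hkn μ hmono A R S hdisj hunion hinitA hinitR hstep hfin
end
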